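/- For every nonempty tree T, let γ_T denote the lexicographically smallest element of S_T (viewing each permutation σ ∈ S_T as the word (σ(1),…,σ(n))), with the convention that γ_| is the empty word. Then for T = T₁ ∨ T₂ with |T₁| = p and |T₂| = q, one has γ_T = (γ_{T₁}(1)+1, …, γ_{T₁}(p)+1, 1, γ_{T₂}(1)+p+1, …, γ_{T₂}(q)+p+1); in particular this word is a permutation belonging to S_T. -/

import Mathlib

/-- The minimum of `a :: l` (computed by folding `min`) is a member of `a :: l`. -/
lemma foldr_min_mem (a : ℤ) : ∀ l : List ℤ, l.foldr min a ∈ a :: l := by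
  intro l
  induction l with
  | nil => simp
  | cons b l ih =>
    simp only [List.foldr_cons]
    rcases min_choice b (l.foldr min a) with h | h
    · rw [h]; simp
    · rw [h]
      rcases List.mem_cons.mp ih with h' | h'
      · simp [h']
      · simp [h']

/-- The planar binary tree `φ(I)` associated to a list `I` of (distinct) integers:
`φ` of the empty list is the empty tree `|`, and `φ(I) = φ(I₁) ∨ φ(I₂)` where
`I = I₁ · (min I) · I₂` is the splitting of `I` at its minimal entry. -/
def phi : List ℤ → Tree Unit
  | [] => Tree.nil
  | a :: l =>
    Tree.node ()
      (phi ((a :: l).take ((a :: l).idxOf (l.foldr min a))))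
      (phi ((a :: l).drop ((a :: l).idxOf (l.foldr min a) + 1)))
termination_by l => l.length
decreasing_by
  · have hm := foldr_min_mem a l
    have hk := List.idxOf_lt_length_iff.mpr hm
    simp only [List.length_take, List.length_cons, List.foldr_attach] at *
    omega
  · simp only [List.length_drop, List.length_cons]
    omega

/-- The standardization of a list `I` of distinct integers: the list whose `j`-th entry is
the (1-indexed) position of `I_j` in the increasing ordering of the entries of `I`. -/
def stdz (I : List ℤ) : List ℤ :=
  I.map (fun x => ((I.filter (fun y => y < x)).length : ℤ) + 1)

/-- `l` is (the list of values of) a permutation of `{1, …, n}`. -/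
def IsPermList (n : ℕ) (l : List ℤ) : Prop :=
  l.Perm ((List.range n).map (fun k => (k : ℤ) + 1))

/-- `S_T`: the set of permutations `σ ∈ S_{|T|}` (identified with their lists of values
`(σ(1),…,σ(n))`) such that `φ(σ) = T`. -/
def STree (T : Tree Unit) : Set (List ℤ) :=
  {l | IsPermList T.numNodes l ∧ phi l = T}

/-!
Cutting a word at its minimal entry shows that the elements of `S_{T₁ ∨ T₂}` are exactly the
permutations `A · 1 · B` with `φ(A) = T₁` and `φ(B) = T₂`; since `φ` only sees the relative
order of the entries, the standardization of `A` lies in `S_{T₁}`, so `γ₁ ≤ std(A)`. As `A`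
avoids `1`, `std(A) + 1 ≤ A` entrywise, whence `γ₁ + 1 ≤ A`. If equality holds, `A` fills
`{2, …, p + 1}`, so `B` avoids `{1, …, p + 1}` and the same argument gives
`γ₂ + (p + 1) ≤ B`.
-/

namespace List

variable {α β : Type*}

theorem foldr_min_le [LinearOrder α] (a : α) (l : List α) :
    ∀ y ∈ a :: l, l.foldr min a ≤ y := by
  induction l with
  | nil => simp
  | cons b t ih =>
    simp only [foldr_cons, mem_cons, forall_eq_or_imp] at ih ⊢
    exact ⟨(min_le_right _ _).trans ih.1, min_le_left _ _,
      fun y hy => (min_le_right _ _).trans (ih.2 y hy)⟩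

theorem idxOf_map [BEq α] [LawfulBEq α] [BEq β] [LawfulBEq β] {f : α → β} {l : List α}
    {a : α} (hf : ∀ x ∈ l, f x = f a → x = a) : (l.map f).idxOf (f a) = l.idxOf a := by
  induction l with
  | nil => simp
  | cons b t ih =>
    by_cases hb : b = a
    · subst hb; simp
    · have hfb : f b ≠ f a := fun h => hb (hf b (by simp) h)
      rw [map_cons, idxOf_cons_ne _ hfb, idxOf_cons_ne _ hb,
        ih fun x hx => hf x (mem_cons_of_mem _ hx)]

variable [LinearOrder α]

theorem le_of_forall₂_le {l l' : List α} (h : Forall₂ (· ≤ ·) l l') : l ≤ l' := by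
  induction h with
  | nil => exact le_rfl
  | cons hab _ ih =>
    rcases hab.eq_or_lt with rfl | hlt
    exacts [cons_le_cons _ ih, le_of_lt (Lex.rel hlt)]

theorem append_lt_append_of_lt {x z : List α} (hlen : x.length = z.length) (h : x < z)
    (u v : List α) : x ++ u < z ++ v := by
  induction x generalizing z with
  | nil =>
    rw [length_eq_zero_iff.mp hlen.symm] at h
    exact absurd h (lt_irrefl _)
  | cons a x ih =>
    obtain _ | ⟨b, z⟩ := z
    · simp at hlen
    · rcases cons_lex_cons_iff.mp h with hab | ⟨rfl, hxz⟩
      exacts [Lex.rel hab, Lex.cons (ih (by simpa using hlen) hxz)]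

theorem append_le_append_of_length_eq {x z u v : List α} (hlen : x.length = z.length)
    (hxz : x ≤ z) (huv : x = z → u ≤ v) : x ++ u ≤ z ++ v := by
  rcases hxz.lt_or_eq with hlt | rfl
  · exact (append_lt_append_of_lt hlen hlt u v).le
  · rcases (huv rfl).lt_or_eq with hlt | rfl
    exacts [le_of_lt (Lex.append_left _ hlt x), le_rfl]

theorem map_le_map_of_strictMono [LinearOrder β] {f : α → β} (hf : StrictMono f)
    {l l' : List α} (h : l ≤ l') : l.map f ≤ l'.map f := by
  rcases h.lt_or_eq with hlt | rfl
  exacts [le_of_lt (List.map_lt (fun _ _ => @hf _ _) hlt), le_rfl]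

end List

lemma foldr_min_eq {a m : ℤ} {l : List ℤ} (hm : m ∈ a :: l) (h : ∀ y ∈ a :: l, m ≤ y) :
    l.foldr min a = m :=
  le_antisymm (l.foldr_min_le a m hm) (h _ (foldr_min_mem a l))

lemma numNodes_phi (l : List ℤ) : BinaryTree.numNodes (phi l) = l.length := by
  induction l using phi.induct with
  | case1 => simp [phi]
  | case2 a l ih₁ ih₂ =>
    have hk := List.idxOf_lt_length_iff.mpr (foldr_min_mem a l)
    simp only [List.foldr_attach] at ih₁ ih₂
    rw [phi.eq_2]
    simp only [BinaryTree.numNodes, ih₁, ih₂, List.length_take, List.length_drop,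
      List.length_cons] at hk ⊢
    omega

lemma phi_append_cons {A B : List ℤ} {m : ℤ}
    (hA : ∀ x ∈ A, m < x) (hB : ∀ x ∈ B, m < x) :
    phi (A ++ m :: B) = BinaryTree.node () (phi A) (phi B) := by
  obtain ⟨a, l, hal⟩ := List.exists_cons_of_ne_nil (List.append_ne_nil_of_right_ne_nil A
    (List.cons_ne_nil m B))
  have hmin : l.foldr min a = m := by
    refine foldr_min_eq (by simp [← hal]) fun y hy => ?_
    rw [← hal, List.mem_append, List.mem_cons] at hy
    rcases hy with hy | rfl | hy
    exacts [(hA y hy).le, le_rfl, (hB y hy).le]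
  have hmA : m ∉ A := fun h => lt_irrefl m (hA m h)
  rw [hal, phi.eq_2, hmin, ← hal, List.idxOf_append_of_notMem hmA, List.idxOf_cons_self,
    add_zero, List.take_left' rfl, List.append_cons, List.drop_left' (by simp)]

lemma phi_map {f : ℤ → ℤ} {l : List ℤ} (hf : StrictMonoOn f {x | x ∈ l}) :
    phi (l.map f) = phi l := by
  induction l using phi.induct with
  | case1 => rfl
  | case2 a l ih₁ ih₂ =>
    simp only [List.foldr_attach] at ih₁ ih₂
    set m := l.foldr min a
    have hm : m ∈ a :: l := foldr_min_mem a l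
    have hfm : (l.map f).foldr min (f a) = f m := by
      refine foldr_min_eq (by simpa using List.mem_map_of_mem (f := f) hm) fun y hy => ?_
      obtain ⟨x, hx, rfl⟩ := List.mem_map.mp (by simpa using hy : y ∈ (a :: l).map f)
      exact hf.monotoneOn hm hx (List.foldr_min_le a l x hx)
    have hidx : ((a :: l).map f).idxOf (f m) = (a :: l).idxOf m :=
      List.idxOf_map fun x hx hxm => hf.injOn hx hm hxm
    rw [List.map_cons, phi.eq_2, hfm, ← List.map_cons, hidx, phi.eq_2, ← List.map_take,
      ← List.map_drop, ih₁ (hf.mono fun x hx => List.take_subset _ _ hx),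
      ih₂ (hf.mono fun x hx => List.drop_subset _ _ hx)]

lemma phi_map_add (l : List ℤ) (c : ℤ) : phi (l.map (· + c)) = phi l :=
  phi_map fun _ _ _ _ h => by simpa using h

/-- In `IsPermList` the cast `(k : ℤ)` elaborates as a coercion of the whole list
`List.range n` (a monadic `bind`); this restates it with a plain `map`. -/
lemma isPermList_iff_perm {n : ℕ} {l : List ℤ} :
    IsPermList n l ↔ l.Perm ((List.range n).map (fun k : ℕ => (k : ℤ) + 1)) := by
  rw [IsPermList, bind_pure_comp, List.map_eq_map, List.map_map]
  rfl

lemma mem_map_range_add_one {n : ℕ} {x : ℤ} :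
    x ∈ (List.range n).map (fun k : ℕ => (k : ℤ) + 1) ↔ 1 ≤ x ∧ x ≤ n := by
  simp only [List.mem_map, List.mem_range]
  exact ⟨by rintro ⟨k, hk, rfl⟩; omega, fun _ => ⟨(x - 1).toNat, by omega, by omega⟩⟩

lemma IsPermList.mem_iff {n : ℕ} {l : List ℤ} (h : IsPermList n l) {x : ℤ} :
    x ∈ l ↔ 1 ≤ x ∧ x ≤ n :=
  (isPermList_iff_perm.mp h).mem_iff.trans mem_map_range_add_one

lemma isPermList_iff {n : ℕ} {l : List ℤ} :
    IsPermList n l ↔ l.Nodup ∧ l.length = n ∧ ∀ x ∈ l, 1 ≤ x ∧ x ≤ n := by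
  have hnd : ((List.range n).map (fun k : ℕ => (k : ℤ) + 1)).Nodup :=
    List.nodup_range.map fun _ _ h => by simpa using h
  refine ⟨fun h => ⟨(isPermList_iff_perm.mp h).nodup_iff.mpr hnd,
    by simpa using (isPermList_iff_perm.mp h).length_eq, fun x => h.mem_iff.mp⟩,
    fun ⟨hlnd, hlen, hmem⟩ => isPermList_iff_perm.mpr ?_⟩
  exact (List.subperm_of_subset hlnd fun x hx =>
    mem_map_range_add_one.mpr (hmem x hx)).perm_of_length_le (by simp [hlen])

lemma IsPermList.append_one_cons {p q : ℕ} {a b : List ℤ} (ha : IsPermList p a)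
    (hb : IsPermList q b) :
    IsPermList (p + q + 1) (a.map (· + 1) ++ 1 :: b.map (· + ((p : ℤ) + 1))) := by
  rw [isPermList_iff] at ha hb ⊢
  obtain ⟨hand, rfl, habd⟩ := ha
  obtain ⟨hbnd, rfl, hbbd⟩ := hb
  refine ⟨?_, by simp only [List.length_append, List.length_map, List.length_cons]; omega, ?_⟩
  · rw [List.nodup_middle, List.nodup_cons, List.nodup_append]
    refine ⟨?_, hand.map (add_left_injective 1), hbnd.map (add_left_injective _), ?_⟩
    · simp only [List.mem_append, List.mem_map, not_or, not_exists, not_and]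
      exact ⟨fun x hx => by linarith [habd x hx], fun x hx => by linarith [hbbd x hx]⟩
    · simp only [List.mem_map]
      rintro _ ⟨x, hx, rfl⟩ _ ⟨y, hy, rfl⟩
      linarith [habd x hx, hbbd y hy]
  · simp only [List.mem_append, List.mem_cons, List.mem_map]
    rintro _ (⟨x, hx, rfl⟩ | rfl | ⟨x, hx, rfl⟩)
    · have := habd x hx; push_cast; omega
    · omega
    · have := hbbd x hx; push_cast; omega

lemma IsPermList.exists_eq_append_one_cons {n : ℕ} {τ : List ℤ} (hτ : IsPermList (n + 1) τ) :
    ∃ A B, τ = A ++ 1 :: B ∧ (∀ x ∈ A, 1 < x) ∧ ∀ x ∈ B, 1 < x := by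
  obtain ⟨A, B, rfl⟩ := List.append_of_mem (hτ.mem_iff.mpr ⟨le_rfl, by omega⟩)
  have hnd := List.nodup_middle.mp (isPermList_iff.mp hτ).1
  rw [List.nodup_cons, List.mem_append, not_or] at hnd
  have hpos : ∀ x ∈ A ++ 1 :: B, x ≠ 1 → 1 < x := fun x hx hne =>
    lt_of_le_of_ne (hτ.mem_iff.mp hx).1 (Ne.symm hne)
  exact ⟨A, B, rfl, fun x hx => hpos x (by simp [hx]) (by rintro rfl; exact hnd.1.1 hx),
    fun x hx => hpos x (by simp [hx]) (by rintro rfl; exact hnd.1.2 hx)⟩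

lemma IsPermList.one_lt_of_mem_map_add {n : ℕ} {l : List ℤ} {c : ℤ} (hl : IsPermList n l)
    (hc : 0 < c) : ∀ y ∈ l.map (· + c), 1 < y := by
  intro _ hy
  obtain ⟨x, hx, rfl⟩ := List.mem_map.mp hy
  linarith [(hl.mem_iff.mp hx).1]

def rank (A : List ℤ) (x : ℤ) : ℕ := (A.filter (· < x)).length

lemma stdz_eq_map_rank (A : List ℤ) : stdz A = A.map (fun x => (rank A x : ℤ) + 1) := rfl

lemma strictMonoOn_rank (A : List ℤ) : StrictMonoOn (rank A) {x | x ∈ A} := by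
  intro x hx y _ hxy
  have hsub : (A.filter (· < x)).Sublist (A.filter (· < y)) :=
    List.monotone_filter_right A fun z hz => by simp at hz ⊢; exact hz.trans hxy
  refine lt_of_le_of_ne hsub.length_le fun hlen => ?_
  have hxmem : x ∈ A.filter (· < y) := List.mem_filter.mpr ⟨hx, by simpa using hxy⟩
  rw [← hsub.eq_of_length hlen] at hxmem
  simp at hxmem

lemma rank_lt_length {A : List ℤ} {x : ℤ} (hx : x ∈ A) : rank A x < A.length :=
  List.length_filter_lt_length_iff_exists.mpr ⟨x, hx, by simp⟩

/-- The `rank A x + 1` entries of `A` that are at most `x` all lie in `(c, x]`. -/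
lemma rank_add_le {A : List ℤ} {c x : ℤ} (hA : A.Nodup) (hc : ∀ y ∈ A, c < y)
    (hx : x ∈ A) :
    (rank A x : ℤ) + 1 + c ≤ x := by
  have hnd : (x :: A.filter (· < x)).Nodup := List.nodup_cons.mpr ⟨by simp, hA.filter _⟩
  have hsub : (x :: A.filter (· < x)).toFinset ⊆ Finset.Ioc c x := by
    intro z hz
    simp only [List.mem_toFinset, List.mem_cons, List.mem_filter, decide_eq_true_eq] at hz
    rcases hz with rfl | ⟨hzA, hzx⟩
    exacts [Finset.mem_Ioc.mpr ⟨hc z hx, le_rfl⟩, Finset.mem_Ioc.mpr ⟨hc z hzA, hzx.le⟩]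
  have hcard := Finset.card_le_card hsub
  rw [List.toFinset_card_of_nodup hnd, Int.card_Ioc, List.length_cons] at hcard
  unfold rank
  omega

lemma stdz_isPermList {A : List ℤ} (hA : A.Nodup) : IsPermList A.length (stdz A) := by
  rw [isPermList_iff, stdz_eq_map_rank]
  refine ⟨hA.map_on fun x hx y hy h => (strictMonoOn_rank A).injOn hx hy (by simpa using h),
    List.length_map _, fun z hz => ?_⟩
  obtain ⟨x, hx, rfl⟩ := List.mem_map.mp hz
  have := rank_lt_length hx
  omega

lemma phi_stdz (A : List ℤ) : phi (stdz A) = phi A := by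
  rw [stdz_eq_map_rank]
  exact phi_map fun x hx y hy h => by simpa using strictMonoOn_rank A hx hy h

lemma map_add_le_of_mem_lowerBounds {T : BinaryTree Unit} {γ A : List ℤ} {c : ℤ}
    (hγ : γ ∈ lowerBounds (STree T)) (hA : A.Nodup) (hphi : phi A = T)
    (hc : ∀ x ∈ A, c < x) : γ.map (· + c) ≤ A := by
  have hperm := stdz_isPermList hA
  rw [← numNodes_phi, hphi] at hperm
  have hstdz : stdz A ∈ STree T := ⟨hperm, (phi_stdz A).trans hphi⟩
  calc γ.map (· + c) ≤ (stdz A).map (· + c) :=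
      List.map_le_map_of_strictMono add_left_strictMono (hγ hstdz)
    _ ≤ A := List.le_of_forall₂_le <| by
      simpa [stdz_eq_map_rank, List.forall₂_map_left_iff, List.forall₂_same] using
        fun x hx => rank_add_le hA hc hx

/-- Recursive description of the lexicographically smallest element `γ_T` of `S_T`
(lists are compared by the lexicographic order, entries from left to right):
if `γ₁` is the lexicographically smallest element of `S_{T₁}` and `γ₂` the one of
`S_{T₂}` (with `|T₁| = p`), then the word
`(γ₁(1)+1, …, γ₁(p)+1, 1, γ₂(1)+p+1, …, γ₂(q)+p+1)` is a permutation belonging to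
`S_{T₁ ∨ T₂}`, and it is the lexicographically smallest element of `S_{T₁ ∨ T₂}`. -/
theorem lexSmallest_STree_node (T₁ T₂ : Tree Unit) (γ₁ γ₂ : List ℤ)
    (hγ₁ : γ₁ ∈ STree T₁) (hmin₁ : ∀ τ ∈ STree T₁, γ₁ ≤ τ)
    (hγ₂ : γ₂ ∈ STree T₂) (hmin₂ : ∀ τ ∈ STree T₂, γ₂ ≤ τ) :
    (γ₁.map (· + 1) ++ 1 :: γ₂.map (· + ((T₁.numNodes : ℤ) + 1)))
        ∈ STree (Tree.node () T₁ T₂) ∧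
      ∀ τ ∈ STree (Tree.node () T₁ T₂),
        (γ₁.map (· + 1) ++ 1 :: γ₂.map (· + ((T₁.numNodes : ℤ) + 1))) ≤ τ := by
  obtain ⟨hperm₁, hphi₁⟩ := hγ₁
  obtain ⟨hperm₂, hphi₂⟩ := hγ₂
  refine ⟨⟨hperm₁.append_one_cons hperm₂, ?_⟩, ?_⟩
  · rw [phi_append_cons (hperm₁.one_lt_of_mem_map_add one_pos)
      (hperm₂.one_lt_of_mem_map_add (by positivity)), phi_map_add, phi_map_add, hphi₁, hphi₂]
  · rintro τ ⟨hτ, hphiτ⟩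
    obtain ⟨A, B, rfl, hA, hB⟩ := IsPermList.exists_eq_append_one_cons hτ
    rw [phi_append_cons hA hB, BinaryTree.node.injEq] at hphiτ
    obtain ⟨-, hphiA, hphiB⟩ := hphiτ
    have hnd := (isPermList_iff.mp hτ).1
    have hAlen : A.length = γ₁.length := by
      rw [← numNodes_phi, hphiA, (isPermList_iff.mp hperm₁).2.1]
    refine List.append_le_append_of_length_eq (by simp [hAlen])
      (map_add_le_of_mem_lowerBounds hmin₁ (hnd.sublist (List.sublist_append_left _ _)) hphiA hA)
      fun hγA => List.cons_le_cons _ ?_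
    have hB' : ∀ x ∈ B, (BinaryTree.numNodes T₁ : ℤ) + 1 < x := by
      intro x hx
      by_contra hxle
      have hx₁ : x - 1 ∈ γ₁ := hperm₁.mem_iff.mpr ⟨by linarith [hB x hx], by linarith⟩
      have hxA : x ∈ A := hγA ▸ List.mem_map.mpr ⟨x - 1, hx₁, by ring⟩
      exact (List.nodup_append.mp hnd).2.2 x hxA x (List.mem_cons_of_mem _ hx) rfl
    exact map_add_le_of_mem_lowerBounds hmin₂
      (hnd.sublist (List.sublist_append_right _ _)).of_cons hphiB hB'
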